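/- arXiv:2506.03674 — 4 statements merged into one kernel-verified Lean document; each statement's English description precedes it below -/
import Mathlib

section
/- Let X be a measurable space, M a finite index set, α : M → ℝ nonnegative weights with Σ_{i∈M} α_i = 1, and D_i (i ∈ M) probability measures on X. Let D_T = Σ_{i∈M} α_i D_i be the mixture measure. Let f_j : X → ℝ (j ∈ M) and y : X → ℝ be measurable functions taking values in [0,1]. Then the disparity of the merged predictor Γ = Σ_{j∈M} α_j f_j from y on the target mixture is bounded by the weighted sum of cross-domain disparities: ε_{D_T}(Σ_{j∈M} α_j f_j, y) ≤ Σ_{i∈M} Σ_{j∈M} α_i α_j · ε_{D_i}(f_j, y). -/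
open MeasureTheory

/-- The disparity of two functions on a measure: `ε_D(f,g) = ∫ |f - g| dD`. -/
noncomputable def disparity {X : Type*} [MeasurableSpace X]
    (D : Measure X) (f g : X → ℝ) : ℝ :=
  ∫ x, |f x - g x| ∂D

theorem merged_predictor_mixture_bound
    {X : Type*} [MeasurableSpace X] {M : Type*} [Fintype M]
    (α : M → ℝ) (hα : ∀ i, 0 ≤ α i) (hαsum : ∑ i, α i = 1)
    (D : M → Measure X) (hD : ∀ i, IsProbabilityMeasure (D i))
    (f : M → X → ℝ) (y : X → ℝ)
    (hf : ∀ j, Measurable (f j)) (hy : Measurable y)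
    (hf01 : ∀ j x, f j x ∈ Set.Icc (0 : ℝ) 1)
    (hy01 : ∀ x, y x ∈ Set.Icc (0 : ℝ) 1) :
    disparity (∑ i, ENNReal.ofReal (α i) • D i) (fun x => ∑ j, α j * f j x) y
      ≤ ∑ i, ∑ j, α i * α j * disparity (D i) (f j) y := by
  set Γ : X → ℝ := fun x => ∑ j, α j * f j x with hΓ
  have hΓmeas : Measurable Γ := by
    apply Finset.measurable_sum
    intro j _
    exact (hf j).const_mul _
  have hbound : ∀ x, |Γ x - y x| ≤ 1 := by
    intro x
    have h1 : 0 ≤ Γ x := Finset.sum_nonneg fun j _ =>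
      mul_nonneg (hα j) (hf01 j x).1
    have h2 : Γ x ≤ 1 := by
      calc Γ x ≤ ∑ j, α j * 1 :=
            Finset.sum_le_sum fun j _ => mul_le_mul_of_nonneg_left (hf01 j x).2 (hα j)
        _ = 1 := by simp [hαsum]
    rcases hy01 x with ⟨hy1, hy2⟩
    rw [abs_le]; constructor <;> linarith
  have hintΓ : ∀ i, Integrable (fun x => |Γ x - y x|) (D i) := by
    intro i
    haveI := hD i
    refine (integrable_const (1:ℝ)).mono' (hΓmeas.sub hy).abs.aestronglyMeasurable ?_
    filter_upwards with x
    simpa [abs_abs] using hbound x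
  have hintf : ∀ i j, Integrable (fun x => |f j x - y x|) (D i) := by
    intro i j
    haveI := hD i
    refine (integrable_const (1:ℝ)).mono' ((hf j).sub hy).abs.aestronglyMeasurable ?_
    filter_upwards with x
    rcases hf01 j x with ⟨h1, h2⟩
    rcases hy01 x with ⟨h3, h4⟩
    rw [Real.norm_eq_abs, abs_abs, abs_le]
    constructor <;> linarith
  have hsplit : disparity (∑ i, ENNReal.ofReal (α i) • D i) Γ y
      = ∑ i, α i * ∫ x, |Γ x - y x| ∂(D i) := by
    rw [disparity, integral_finset_sum_measure]
    · refine Finset.sum_congr rfl fun i _ => ?_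
      rw [integral_smul_measure, ENNReal.toReal_ofReal (hα i), smul_eq_mul]
    · intro i _
      exact (hintΓ i).smul_measure (by simp)
  rw [hsplit]
  have hstep : ∀ i, α i * ∫ x, |Γ x - y x| ∂(D i)
      ≤ ∑ j, α i * α j * disparity (D i) (f j) y := by
    intro i
    have hpt : ∀ x, |Γ x - y x| ≤ ∑ j, α j * |f j x - y x| := by
      intro x
      have : Γ x - y x = ∑ j, α j * (f j x - y x) := by
        simp [hΓ, Finset.sum_sub_distrib, mul_sub, ← Finset.sum_mul, hαsum]
      rw [this]
      calc |∑ j, α j * (f j x - y x)| ≤ ∑ j, |α j * (f j x - y x)| :=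
            Finset.abs_sum_le_sum_abs _ _
        _ = ∑ j, α j * |f j x - y x| := by
            refine Finset.sum_congr rfl fun j _ => ?_
            rw [abs_mul, abs_of_nonneg (hα j)]
    have hint2 : Integrable (fun x => ∑ j, α j * |f j x - y x|) (D i) :=
      integrable_finset_sum _ fun j _ => (hintf i j).const_mul _
    have hI : ∫ x, |Γ x - y x| ∂(D i) ≤ ∫ x, ∑ j, α j * |f j x - y x| ∂(D i) :=
      integral_mono (hintΓ i) hint2 hpt
    have hIsum : ∫ x, ∑ j, α j * |f j x - y x| ∂(D i)
        = ∑ j, α j * disparity (D i) (f j) y := by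
      rw [integral_finset_sum _ fun j _ => (hintf i j).const_mul _]
      exact Finset.sum_congr rfl fun j _ => integral_const_mul _ _
    calc α i * ∫ x, |Γ x - y x| ∂(D i)
        ≤ α i * ∑ j, α j * disparity (D i) (f j) y := by
          rw [← hIsum]; exact mul_le_mul_of_nonneg_left hI (hα i)
      _ = ∑ j, α i * α j * disparity (D i) (f j) y := by
          rw [Finset.mul_sum]; ring_nf
  exact Finset.sum_le_sum fun i _ => hstep i
end

section
/- Let X be a measurable space, M a finite index set, α : M → ℝ nonnegative weights with Σ_{i∈M} α_i = 1, and D_i (i ∈ M) probability measures on X with mixture D_T = Σ_{i∈M} α_i D_i. Let f_j : X → ℝ (j ∈ M) and y : X → ℝ be measurable functions taking values in [0,1], and assume each f_i is an optimal learner on its own domain, i.e. ε_{D_i}(f_i, y) = 0 for every i ∈ M. Then the target-domain error of the merged predictor is bounded by the sum of the cross-validation errors of the sub-learners across the other distributions: ε_{D_T}(Σ_{j∈M} α_j f_j, y) ≤ Σ_{i∈M} Σ_{j∈M, j≠i} α_i α_j · ε_{D_i}(f_j, y). -/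
open MeasureTheory

theorem merged_predictor_cross_validation_bound
    {X : Type*} [MeasurableSpace X] {M : Type*} [Fintype M] [DecidableEq M]
    (α : M → ℝ) (hα : ∀ i, 0 ≤ α i) (hαsum : ∑ i, α i = 1)
    (D : M → Measure X) (hD : ∀ i, IsProbabilityMeasure (D i))
    (f : M → X → ℝ) (y : X → ℝ)
    (hf : ∀ j, Measurable (f j)) (hy : Measurable y)
    (hf01 : ∀ j x, f j x ∈ Set.Icc (0 : ℝ) 1)
    (hy01 : ∀ x, y x ∈ Set.Icc (0 : ℝ) 1)
    (hopt : ∀ i, disparity (D i) (f i) y = 0) :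
    disparity (∑ i, ENNReal.ofReal (α i) • D i) (fun x => ∑ j, α j * f j x) y
      ≤ ∑ i, ∑ j ∈ Finset.univ.erase i, α i * α j * disparity (D i) (f j) y := by
  classical
  have habs : ∀ (g : X → ℝ), (∀ x, g x ∈ Set.Icc (0:ℝ) 1) → ∀ x, |g x - y x| ≤ 1 := by
    intro g hg x
    have h1 := hg x; have h2 := hy01 x
    rw [Set.mem_Icc] at h1 h2
    rw [abs_le]; constructor <;> linarith [h1.1, h1.2, h2.1, h2.2]
  have hmF : Measurable (fun x => ∑ j, α j * f j x) :=
    Finset.measurable_sum _ (fun j _ => (hf j).const_mul _)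
  have hF01 : ∀ x, (∑ j, α j * f j x) ∈ Set.Icc (0:ℝ) 1 := by
    intro x
    constructor
    · exact Finset.sum_nonneg fun j _ => mul_nonneg (hα j) (hf01 j x).1
    · calc ∑ j, α j * f j x ≤ ∑ j, α j := by
            refine Finset.sum_le_sum fun j _ => ?_
            have h1 := hf01 j x
            rw [Set.mem_Icc] at h1
            nlinarith [h1.1, h1.2, hα j]
        _ = 1 := hαsum
  have hint : ∀ (g : X → ℝ), Measurable g → (∀ x, g x ∈ Set.Icc (0:ℝ) 1) →
      ∀ i, Integrable (fun x => |g x - y x|) (D i) := by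
    intro g hg hg01 i
    have := hD i
    apply Integrable.mono' (integrable_const 1) ((hg.sub hy).abs.aestronglyMeasurable)
    filter_upwards with x
    rw [Real.norm_eq_abs, abs_abs]
    exact habs g hg01 x
  unfold disparity
  rw [integral_finset_sum_measure
    (fun i _ => (hint _ hmF hF01 i).smul_measure ENNReal.ofReal_ne_top)]
  have step2 : ∀ i, ∫ x, |(∑ j, α j * f j x) - y x| ∂(D i)
      ≤ ∑ j, α j * disparity (D i) (f j) y := by
    intro i
    have h1 : ∫ x, (∑ j, α j * |f j x - y x|) ∂(D i)
        = ∑ j, α j * disparity (D i) (f j) y := by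
      rw [integral_finset_sum _ (fun j _ => ((hint (f j) (hf j) (hf01 j) i).const_mul _))]
      refine Finset.sum_congr rfl fun j _ => ?_
      rw [integral_const_mul]; rfl
    refine le_trans (integral_mono (hint _ hmF hF01 i)
      (integrable_finset_sum _ (fun j _ => ((hint (f j) (hf j) (hf01 j) i).const_mul _)))
      ?_) (le_of_eq h1)
    intro x
    have heq : (∑ j, α j * f j x) - y x = ∑ j, α j * (f j x - y x) := by
      simp only [mul_sub]
      rw [Finset.sum_sub_distrib, ← Finset.sum_mul, hαsum, one_mul]
    calc |(∑ j, α j * f j x) - y x| = |∑ j, α j * (f j x - y x)| := by rw [heq]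
      _ ≤ ∑ j, |α j * (f j x - y x)| := Finset.abs_sum_le_sum_abs _ _
      _ = ∑ j, α j * |f j x - y x| := by
          refine Finset.sum_congr rfl fun j _ => ?_
          rw [abs_mul, abs_of_nonneg (hα j)]
  calc ∑ i, ∫ x, |(∑ j, α j * f j x) - y x| ∂(ENNReal.ofReal (α i) • D i)
      = ∑ i, α i * ∫ x, |(∑ j, α j * f j x) - y x| ∂(D i) := by
        refine Finset.sum_congr rfl fun i _ => ?_
        rw [integral_smul_measure, ENNReal.toReal_ofReal (hα i), smul_eq_mul]
    _ ≤ ∑ i, α i * (∑ j, α j * disparity (D i) (f j) y) := by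
        exact Finset.sum_le_sum fun i _ => mul_le_mul_of_nonneg_left (step2 i) (hα i)
    _ = ∑ i, ∑ j ∈ Finset.univ.erase i, α i * α j * disparity (D i) (f j) y := by
        refine Finset.sum_congr rfl fun i _ => ?_
        rw [Finset.mul_sum]
        rw [← Finset.add_sum_erase _ _ (Finset.mem_univ i)]
        simp only [hopt i, mul_zero, zero_add]
        exact Finset.sum_congr rfl fun j _ => by ring
end

section
/- Let X be a measurable space, H a nonempty set of measurable functions X → ℝ taking values in [0,1], y : X → ℝ a measurable labeling function taking values in [0,1], and S, T probability measures on X (source and target domains). Write ε_D(h) = ε_D(h, y) for the error of h on domain D. Then for every h ∈ H, the target error satisfies the domain-adaptation bound ε_T(h) ≤ ε_S(h) + (1/2) · d_{H∆H}(S, T) + λ, where λ = inf_{h' ∈ H} (ε_S(h') + ε_T(h')) is the optimal cross-domain generalization error. -/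
open MeasureTheory

/-- The `H∆H`-divergence between two measures:
`d_{H∆H}(D₁, D₂) = 2 ⋅ sup_{f, g ∈ H} |ε_{D₁}(f,g) − ε_{D₂}(f,g)|`. -/
noncomputable def hdhDiv {X : Type*} [MeasurableSpace X]
    (H : Set (X → ℝ)) (D₁ D₂ : Measure X) : ℝ :=
  2 * ⨆ p : H × H, |disparity D₁ p.1 p.2 - disparity D₂ p.1 p.2|

theorem domain_adaptation_bound
    {X : Type*} [MeasurableSpace X]
    (H : Set (X → ℝ)) (hH : H.Nonempty)
    (hHmeas : ∀ f ∈ H, Measurable f)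
    (hH01 : ∀ f ∈ H, ∀ x, f x ∈ Set.Icc (0 : ℝ) 1)
    (y : X → ℝ) (hy : Measurable y) (hy01 : ∀ x, y x ∈ Set.Icc (0 : ℝ) 1)
    (S T : Measure X)
    (hS : IsProbabilityMeasure S) (hT : IsProbabilityMeasure T)
    (h : X → ℝ) (hh : h ∈ H) :
    disparity T h y
      ≤ disparity S h y + (1 / 2) * hdhDiv H S T
        + ⨅ h' : H, (disparity S h' y + disparity T h' y) := by
  haveI : Nonempty H := hH.to_subtype
  -- pointwise bound
  have hbound : ∀ f g : X → ℝ, (∀ x, f x ∈ Set.Icc (0:ℝ) 1) →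
      (∀ x, g x ∈ Set.Icc (0:ℝ) 1) → ∀ x, |f x - g x| ≤ 1 := by
    intro f g hf hg x
    have h1 := hf x; have h2 := hg x
    rw [Set.mem_Icc] at h1 h2
    rw [abs_sub_le_iff]
    constructor <;> linarith
  -- integrability
  have hinteg : ∀ (D : Measure X), IsProbabilityMeasure D → ∀ f g : X → ℝ,
      Measurable f → Measurable g → (∀ x, f x ∈ Set.Icc (0:ℝ) 1) →
      (∀ x, g x ∈ Set.Icc (0:ℝ) 1) → Integrable (fun x => |f x - g x|) D := by
    intro D hD f g hf hg hf1 hg1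
    apply Integrable.mono' (integrable_const (1:ℝ))
    · exact ((hf.sub hg).abs).aestronglyMeasurable
    · exact Filter.Eventually.of_forall fun x => by
        simpa [Real.norm_eq_abs, abs_abs] using hbound f g hf1 hg1 x
  -- disparity in [0,1]
  have hd0 : ∀ (D : Measure X) (f g : X → ℝ), 0 ≤ disparity D f g := by
    intro D f g
    exact integral_nonneg fun x => abs_nonneg _
  have hd1 : ∀ (D : Measure X), IsProbabilityMeasure D → ∀ f g : X → ℝ,
      Measurable f → Measurable g → (∀ x, f x ∈ Set.Icc (0:ℝ) 1) →
      (∀ x, g x ∈ Set.Icc (0:ℝ) 1) → disparity D f g ≤ 1 := by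
    intro D hD f g hf hg hf1 hg1
    calc disparity D f g ≤ ∫ _x, (1:ℝ) ∂D :=
          integral_mono (hinteg D hD f g hf hg hf1 hg1) (integrable_const 1)
            (hbound f g hf1 hg1)
      _ = 1 := by simp
  -- triangle inequality
  have htri : ∀ (D : Measure X), IsProbabilityMeasure D → ∀ f k g : X → ℝ,
      Measurable f → Measurable k → Measurable g →
      (∀ x, f x ∈ Set.Icc (0:ℝ) 1) → (∀ x, k x ∈ Set.Icc (0:ℝ) 1) →
      (∀ x, g x ∈ Set.Icc (0:ℝ) 1) →
      disparity D f g ≤ disparity D f k + disparity D k g := by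
    intro D hD f k g hf hk hg hf1 hk1 hg1
    have i1 := hinteg D hD f k hf hk hf1 hk1
    have i2 := hinteg D hD k g hk hg hk1 hg1
    calc disparity D f g ≤ ∫ x, (|f x - k x| + |k x - g x|) ∂D := by
          exact integral_mono (hinteg D hD f g hf hg hf1 hg1) (i1.add i2)
            fun x => abs_sub_le _ _ _
      _ = disparity D f k + disparity D k g := integral_add i1 i2
  have hsym : ∀ (D : Measure X) (f g : X → ℝ),
      disparity D f g = disparity D g f := by
    intro D f g; unfold disparity; simp_rw [abs_sub_comm]
  -- bddAbove of the sup
  have hbdd : BddAbove (Set.range fun p : H × H =>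
      |disparity S p.1 p.2 - disparity T p.1 p.2|) := by
    refine ⟨2, ?_⟩
    rintro _ ⟨p, rfl⟩
    have hm1 := hHmeas _ p.1.2
    have hm2 := hHmeas _ p.2.2
    have hb1 := hH01 _ p.1.2
    have hb2 := hH01 _ p.2.2
    have x1 := hd0 S p.1 p.2
    have x2 := hd0 T p.1 p.2
    have y1 := hd1 S hS p.1 p.2 hm1 hm2 hb1 hb2
    have y2 := hd1 T hT p.1 p.2 hm1 hm2 hb1 hb2
    rw [abs_sub_le_iff]
    constructor <;> linarith
  -- main bound for each h'
  have main : ∀ h' : H, disparity T h y ≤ disparity S h y + (1/2) * hdhDiv H S T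
      + (disparity S h' y + disparity T h' y) := by
    intro h'
    have hm := hHmeas h hh
    have hb := hH01 h hh
    have hm' := hHmeas _ h'.2
    have hb' := hH01 _ h'.2
    have t1 : disparity T h y ≤ disparity T h h' + disparity T h' y :=
      htri T hT h h' y hm hm' hy hb hb' hy01
    have t2 : disparity S h h' ≤ disparity S h y + disparity S h' y := by
      have := htri S hS h y h' hm hy hm' hb hy01 hb'
      rwa [hsym S y h'] at this
    have t3 : |disparity S h h' - disparity T h h'| ≤
        ⨆ p : H × H, |disparity S p.1 p.2 - disparity T p.1 p.2| :=
      le_ciSup hbdd (⟨⟨h, hh⟩, h'⟩ : H × H)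
    have t4 : disparity T h h' - disparity S h h' ≤
        |disparity S h h' - disparity T h h'| := by
      rw [abs_sub_comm]; exact le_abs_self _
    have t5 : (1/2 : ℝ) * hdhDiv H S T =
        ⨆ p : H × H, |disparity S p.1 p.2 - disparity T p.1 p.2| := by
      unfold hdhDiv; ring
    linarith
  have : disparity T h y - (disparity S h y + (1/2) * hdhDiv H S T) ≤
      ⨅ h' : H, (disparity S h' y + disparity T h' y) := by
    apply le_ciInf
    intro h'
    linarith [main h']
  linarith
end

section
/- Let X be a measurable space, H a nonempty set of measurable functions X → ℝ taking values in [0,1], y : X → ℝ a measurable labeling function taking values in [0,1], M a finite index set, α : M → ℝ nonnegative weights with Σ_{j∈M} α_j = 1, D_j (j ∈ M) probability measures on X (source domains), T a probability measure on X (target domain), and h_j ∈ H for each j ∈ M. Write ε_D(h) = ε_D(h, y). Then the merged predictor Γ = Σ_{j∈M} α_j h_j satisfies ε_T(Σ_{j∈M} α_j h_j) ≤ Σ_{j∈M} α_j · ( ε_{D_j}(h_j) + (1/2) · d_{H∆H}(D_j, T) + λ_j ), where λ_j = inf_{h ∈ H} (ε_{D_j}(h) + ε_T(h)). -/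
open MeasureTheory

section aux
variable {X : Type*} [MeasurableSpace X]

lemma disp_int (D : Measure X) [IsFiniteMeasure D]
    {f g : X → ℝ} (hf : Measurable f) (hg : Measurable g)
    (hfb : ∀ x, f x ∈ Set.Icc (0:ℝ) 1) (hgb : ∀ x, g x ∈ Set.Icc (0:ℝ) 1) :
    Integrable (fun x => |f x - g x|) D := by
  refine ⟨((hf.sub hg).abs).aestronglyMeasurable, ?_⟩
  apply HasFiniteIntegral.of_bounded (C := 1)
  filter_upwards with x
  have h1 := hfb x; have h2 := hgb x
  simp only [Set.mem_Icc] at h1 h2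
  rw [Real.norm_eq_abs, abs_abs, abs_sub_le_iff]
  constructor <;> linarith

lemma disp_nonneg (D : Measure X) (f g : X → ℝ) : 0 ≤ disparity D f g :=
  integral_nonneg fun _ => abs_nonneg _

lemma disp_le_one (D : Measure X) [IsProbabilityMeasure D]
    {f g : X → ℝ} (hf : Measurable f) (hg : Measurable g)
    (hfb : ∀ x, f x ∈ Set.Icc (0:ℝ) 1) (hgb : ∀ x, g x ∈ Set.Icc (0:ℝ) 1) :
    disparity D f g ≤ 1 := by
  have : disparity D f g ≤ ∫ _, (1:ℝ) ∂D := by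
    apply integral_mono (disp_int D hf hg hfb hgb) (integrable_const 1)
    intro x
    have h1 := hfb x; have h2 := hgb x
    simp only [Set.mem_Icc] at h1 h2
    rw [abs_sub_le_iff]; constructor <;> dsimp only <;> linarith
  simpa using this

lemma disp_comm (D : Measure X) (f g : X → ℝ) : disparity D f g = disparity D g f := by
  simp [disparity, abs_sub_comm]

lemma disp_triangle (D : Measure X) [IsFiniteMeasure D]
    {f g k : X → ℝ} (hf : Measurable f) (hg : Measurable g) (hk : Measurable k)
    (hfb : ∀ x, f x ∈ Set.Icc (0:ℝ) 1) (hgb : ∀ x, g x ∈ Set.Icc (0:ℝ) 1)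
    (hkb : ∀ x, k x ∈ Set.Icc (0:ℝ) 1) :
    disparity D f k ≤ disparity D f g + disparity D g k := by
  have : disparity D f g + disparity D g k
      = ∫ x, (|f x - g x| + |g x - k x|) ∂D := by
    rw [integral_add (disp_int D hf hg hfb hgb) (disp_int D hg hk hgb hkb)]; rfl
  rw [this]
  exact integral_mono (disp_int D hf hk hfb hkb)
    ((disp_int D hf hg hfb hgb).add (disp_int D hg hk hgb hkb))
    (fun x => abs_sub_le _ _ _)

lemma abs_diff_le_half_hdh (H : Set (X → ℝ))
    (hHmeas : ∀ f ∈ H, Measurable f)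
    (hH01 : ∀ f ∈ H, ∀ x, f x ∈ Set.Icc (0 : ℝ) 1)
    (D₁ D₂ : Measure X) [IsProbabilityMeasure D₁] [IsProbabilityMeasure D₂]
    {f g : X → ℝ} (hf : f ∈ H) (hg : g ∈ H) :
    |disparity D₁ f g - disparity D₂ f g| ≤ (1/2) * hdhDiv H D₁ D₂ := by
  have hbdd : BddAbove (Set.range fun p : H × H =>
      |disparity D₁ p.1 p.2 - disparity D₂ p.1 p.2|) := by
    refine ⟨1, ?_⟩
    rintro _ ⟨⟨⟨a, ha⟩, ⟨b, hb⟩⟩, rfl⟩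
    rw [abs_sub_le_iff]
    have h1 := disp_le_one D₁ (hHmeas a ha) (hHmeas b hb) (hH01 a ha) (hH01 b hb)
    have h2 := disp_le_one D₂ (hHmeas a ha) (hHmeas b hb) (hH01 a ha) (hH01 b hb)
    have h3 := disp_nonneg D₁ a b
    have h4 := disp_nonneg D₂ a b
    constructor <;> dsimp only <;> linarith
  have := le_ciSup hbdd (⟨⟨f, hf⟩, ⟨g, hg⟩⟩ : H × H)
  rw [hdhDiv]
  linarith

end aux

theorem merged_predictor_domain_adaptation_bound
    {X : Type*} [MeasurableSpace X] {M : Type*} [Fintype M]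
    (H : Set (X → ℝ)) (hH : H.Nonempty)
    (hHmeas : ∀ f ∈ H, Measurable f)
    (hH01 : ∀ f ∈ H, ∀ x, f x ∈ Set.Icc (0 : ℝ) 1)
    (y : X → ℝ) (hy : Measurable y) (hy01 : ∀ x, y x ∈ Set.Icc (0 : ℝ) 1)
    (α : M → ℝ) (hα : ∀ j, 0 ≤ α j) (hαsum : ∑ j, α j = 1)
    (D : M → Measure X) (hD : ∀ j, IsProbabilityMeasure (D j))
    (T : Measure X) (hT : IsProbabilityMeasure T)
    (h : M → X → ℝ) (hh : ∀ j, h j ∈ H) :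
    disparity T (fun x => ∑ j, α j * h j x) y
      ≤ ∑ j, α j * (disparity (D j) (h j) y + (1 / 2) * hdhDiv H (D j) T
          + ⨅ h' : H, (disparity (D j) h' y + disparity T h' y)) := by
  haveI : Nonempty H := hH.to_subtype
  have hmeas : ∀ j, Measurable (h j) := fun j => hHmeas _ (hh j)
  have hb : ∀ j, ∀ x, h j x ∈ Set.Icc (0:ℝ) 1 := fun j => hH01 _ (hh j)
  -- Γ takes values in [0,1]
  have hΓb : ∀ x, (∑ j, α j * h j x) ∈ Set.Icc (0:ℝ) 1 := by
    intro x
    constructor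
    · exact Finset.sum_nonneg fun j _ => mul_nonneg (hα j) (hb j x).1
    · calc ∑ j, α j * h j x ≤ ∑ j, α j := by
            apply Finset.sum_le_sum
            intro j _
            nlinarith [(hb j x).1, (hb j x).2, hα j]
        _ = 1 := hαsum
  have hΓmeas : Measurable fun x => ∑ j, α j * h j x :=
    Finset.measurable_sum Finset.univ fun j _ => (measurable_const.mul (hmeas j))
  -- Step 1: disparity T Γ y ≤ ∑ α j * disparity T (h j) y
  have step1 : disparity T (fun x => ∑ j, α j * h j x) y
      ≤ ∑ j, α j * disparity T (h j) y := by
    have hint : ∀ j : M, Integrable (fun x => α j * |h j x - y x|) T :=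
      fun j => (disp_int T (hmeas j) hy (hb j) hy01).const_mul (α j)
    have hrhs : ∑ j, α j * disparity T (h j) y
        = ∫ x, ∑ j, α j * |h j x - y x| ∂T := by
      rw [integral_finset_sum _ fun j _ => hint j]
      congr 1; ext j
      rw [disparity, integral_const_mul]
    rw [hrhs]
    apply integral_mono (disp_int T hΓmeas hy hΓb hy01)
      (integrable_finset_sum _ fun j _ => hint j)
    intro x
    dsimp only
    calc |∑ j, α j * h j x - y x| = |∑ j, α j * (h j x - y x)| := by
          congr 1
          simp only [mul_sub, Finset.sum_sub_distrib, ← Finset.sum_mul, hαsum, one_mul]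
      _ ≤ ∑ j, |α j * (h j x - y x)| := Finset.abs_sum_le_sum_abs _ _
      _ = ∑ j, α j * |h j x - y x| := by
          apply Finset.sum_congr rfl
          intro j _
          rw [abs_mul, abs_of_nonneg (hα j)]
  -- Step 2: per-term bound
  have step2 : ∀ j : M, disparity T (h j) y
      ≤ disparity (D j) (h j) y + (1/2) * hdhDiv H (D j) T
        + ⨅ h' : H, (disparity (D j) h' y + disparity T h' y) := by
    intro j
    haveI := hD j
    have key : ∀ h' : H,
        disparity T (h j) y - (disparity (D j) (h j) y + (1/2) * hdhDiv H (D j) T)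
          ≤ disparity (D j) h'.1 y + disparity T h'.1 y := by
      rintro ⟨g, hg⟩
      have hgm := hHmeas g hg
      have hgb := hH01 g hg
      have t1 : disparity T (h j) y ≤ disparity T (h j) g + disparity T g y :=
        disp_triangle T (hmeas j) hgm hy (hb j) hgb hy01
      have t2 : |disparity (D j) (h j) g - disparity T (h j) g|
          ≤ (1/2) * hdhDiv H (D j) T :=
        abs_diff_le_half_hdh H hHmeas hH01 (D j) T (hh j) hg
      have t2' : disparity T (h j) g ≤ disparity (D j) (h j) g + (1/2) * hdhDiv H (D j) T := by
        have := abs_le.mp t2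
        linarith [this.1]
      have t3 : disparity (D j) (h j) g
          ≤ disparity (D j) (h j) y + disparity (D j) y g :=
        disp_triangle (D j) (hmeas j) hy hgm (hb j) hy01 hgb
      have t4 : disparity (D j) y g = disparity (D j) g y := disp_comm _ _ _
      dsimp only
      linarith
    have hle : disparity T (h j) y - (disparity (D j) (h j) y + (1/2) * hdhDiv H (D j) T)
        ≤ ⨅ h' : H, (disparity (D j) h'.1 y + disparity T h'.1 y) :=
      le_ciInf key
    linarith
  calc disparity T (fun x => ∑ j, α j * h j x) y
      ≤ ∑ j, α j * disparity T (h j) y := step1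
    _ ≤ ∑ j, α j * (disparity (D j) (h j) y + (1 / 2) * hdhDiv H (D j) T
          + ⨅ h' : H, (disparity (D j) h' y + disparity T h' y)) := by
        apply Finset.sum_le_sum
        intro j _
        exact mul_le_mul_of_nonneg_left (step2 j) (hα j)
end
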